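/- arXiv:1312.5793 — 2 statements merged into one kernel-verified Lean document; each statement's English description precedes it below -/
import Mathlib

section
/- Let c ∈ ℝ \ {0} and let q(x) = c·x² on ℝ. Every Schwartz function φ : ℝ → ℂ admits a fiber density φ̃ along q, and φ̃ belongs to L²(ℝ) (with respect to Lebesgue measure) if and only if φ(0) = 0. -/
/-!
Substituting `r = c x²` on each half-line shows that the fiber density of `f` along `x ↦ c x²` is
`r ↦ (f(√(r/c)) + f(-√(r/c))) / (2 |c| √(r/c))` on `{r | 0 < r / c}` and `0` elsewhere; two fiber
densities have the same integral over every measurable set, hence agree almost everywhere. The same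
substitution turns the `L²` norm of this density into `(2|c|)⁻¹ ∫₀^∞ |f x + f (-x)|² / x dx`. For a
Schwartz function the integrand is `O(1/x)` near `0` with leading coefficient `4|φ(0)|²`, which is
not integrable unless `φ(0) = 0`; when `φ(0) = 0`, the Lipschitz bound `|φ x + φ (-x)| ≤ K x`
dominates it by the integrable `K |φ x + φ (-x)|`.
-/

open MeasureTheory

/-- `ft` is a fiber density of `f` along the map `q : ℝ → ℝ` (w.r.t. Lebesgue measure). -/
def IsFiberDensity1 (q : ℝ → ℝ) (f : ℝ → ℂ) (ft : ℝ → ℂ) : Prop :=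
  Measurable ft ∧
    ∀ g : ℝ → ℂ, Measurable g → (∃ C : ℝ, ∀ r : ℝ, ‖g r‖ ≤ C) →
      ∫ x : ℝ, f x * g (q x) = ∫ r : ℝ, ft r * g r

open Set Filter Topology Asymptotics

theorem ae_eq_of_forall_setIntegral_eq_of_stronglyMeasurable {α E : Type*} [MeasurableSpace α]
    [NormedAddCommGroup E] [NormedSpace ℝ E] [CompleteSpace E] {μ : Measure α} [SigmaFinite μ]
    {f g : α → E} (hf : StronglyMeasurable f) (hg : StronglyMeasurable g)
    (hfg : ∀ s, MeasurableSet s → ∫ x in s, f x ∂μ = ∫ x in s, g x ∂μ) : f =ᵐ[μ] g := by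
  -- on `B n` both functions are bounded, so the hypothesis compares genuine integrals there
  set B : ℕ → Set α := fun n => {x | ‖f x‖ ≤ n} ∩ {x | ‖g x‖ ≤ n}
  have hB : ∀ n, MeasurableSet (B n) := fun n =>
    (measurableSet_le hf.norm.measurable measurable_const).inter
      (measurableSet_le hg.norm.measurable measurable_const)
  have hcover : ⋃ n, B n = univ := by
    refine eq_univ_of_forall fun x => mem_iUnion.2 ?_
    obtain ⟨n, hn⟩ := exists_nat_ge (max ‖f x‖ ‖g x‖)
    exact ⟨n, (le_max_left _ _).trans hn, (le_max_right _ _).trans hn⟩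
  have hint : ∀ n (h : α → E), StronglyMeasurable h → (∀ x ∈ B n, ‖h x‖ ≤ n) →
      ∀ s, MeasurableSet s → μ.restrict (B n) s < ⊤ → IntegrableOn h s (μ.restrict (B n)) :=
    fun n h hh hbd s _ hs => IntegrableOn.of_bound hs hh.aestronglyMeasurable n
      (ae_restrict_of_ae (ae_restrict_of_forall_mem (hB n) hbd))
  rw [EventuallyEq, ← Measure.restrict_univ (μ := μ), ← hcover, ae_restrict_iUnion_iff]
  intro n
  refine ae_eq_of_forall_setIntegral_eq_of_sigmaFinite (hint n f hf fun x hx => hx.1)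
    (hint n g hg fun x hx => hx.2) fun s hs _ => ?_
  rw [Measure.restrict_restrict hs]
  exact hfg _ (hs.inter (hB n))

theorem IsFiberDensity1.ae_eq {q : ℝ → ℝ} {f ft ft' : ℝ → ℂ} (h : IsFiberDensity1 q f ft)
    (h' : IsFiberDensity1 q f ft') : ft =ᵐ[volume] ft' := by
  refine ae_eq_of_forall_setIntegral_eq_of_stronglyMeasurable h.1.stronglyMeasurable
    h'.1.stronglyMeasurable fun s hs => ?_
  have hg : Measurable (s.indicator 1 : ℝ → ℂ) := measurable_const.indicator hs
  have hb : ∃ C : ℝ, ∀ r, ‖s.indicator (1 : ℝ → ℂ) r‖ ≤ C :=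
    ⟨1, fun r => (norm_indicator_le_norm_self _ _).trans (by simp)⟩
  simpa only [← indicator_mul_right, Pi.one_apply, mul_one, integral_indicator hs]
    using (h.2 _ hg hb).symm.trans (h'.2 _ hg hb)

section ConstMulSq

variable {E : Type*} [NormedAddCommGroup E] [NormedSpace ℝ E] {c : ℝ}

theorem integral_eq_integral_Ioi_add_comp_neg {h : ℝ → E} (hh : Integrable h) :
    ∫ x, h x = ∫ x in Ioi 0, (h x + h (-x)) := by
  rw [integral_add hh.integrableOn hh.comp_neg.integrableOn, integral_comp_neg_Ioi, neg_zero,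
    ← integral_add_compl measurableSet_Ioi hh, compl_Ioi]

theorem image_const_mul_sq_Ioi (hc : c ≠ 0) :
    (fun x : ℝ => c * x ^ 2) '' Ioi 0 = {r | 0 < r / c} := by
  ext r
  constructor
  · rintro ⟨x, hx, rfl⟩
    simpa [hc] using pow_pos hx 2
  · intro hr
    refine ⟨√(r / c), Real.sqrt_pos.2 hr, ?_⟩
    simp only [Real.sq_sqrt hr.le]
    field_simp

theorem injOn_const_mul_sq_Ioi (hc : c ≠ 0) : InjOn (fun x : ℝ => c * x ^ 2) (Ioi 0) :=
  fun _ hx _ hy h => (pow_left_inj₀ (le_of_lt hx) (le_of_lt hy) two_ne_zero).1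
    (mul_left_cancel₀ hc h)

theorem hasDerivWithinAt_const_mul_sq (s : Set ℝ) (x : ℝ) :
    HasDerivWithinAt (fun x : ℝ => c * x ^ 2) (2 * c * x) s x := by
  simpa [mul_comm, mul_left_comm] using ((hasDerivAt_pow 2 x).const_mul c).hasDerivWithinAt

theorem setIntegral_div_pos_eq_integral_Ioi (hc : c ≠ 0) (h : ℝ → E) :
    ∫ r in {r | 0 < r / c}, h r = ∫ x in Ioi 0, |2 * c * x| • h (c * x ^ 2) := by
  rw [← image_const_mul_sq_Ioi hc]
  exact integral_image_eq_integral_abs_deriv_smul measurableSet_Ioi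
    (fun x _ => hasDerivWithinAt_const_mul_sq _ x) (injOn_const_mul_sq_Ioi hc) h

theorem integrableOn_div_pos_iff_integrableOn_Ioi (hc : c ≠ 0) (h : ℝ → E) :
    IntegrableOn h {r | 0 < r / c} ↔
      IntegrableOn (fun x => |2 * c * x| • h (c * x ^ 2)) (Ioi 0) := by
  rw [← image_const_mul_sq_Ioi hc]
  exact integrableOn_image_iff_integrableOn_abs_deriv_smul measurableSet_Ioi
    (fun x _ => hasDerivWithinAt_const_mul_sq _ x) (injOn_const_mul_sq_Ioi hc) h

end ConstMulSq

noncomputable def sqFiberDensity (c : ℝ) (f : ℝ → ℂ) (r : ℝ) : ℂ :=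
  if 0 < r / c then (f √(r / c) + f (-√(r / c))) / (2 * |c| * √(r / c) : ℝ) else 0

section sqFiberDensity

variable {c : ℝ} {f : ℝ → ℂ}

theorem measurable_sqFiberDensity (hf : Measurable f) : Measurable (sqFiberDensity c f) := by
  unfold sqFiberDensity
  refine Measurable.ite (measurableSet_lt measurable_const (by fun_prop)) ?_ measurable_const
  fun_prop

theorem sqFiberDensity_of_not_pos {r : ℝ} (hr : ¬ 0 < r / c) : sqFiberDensity c f r = 0 :=
  if_neg hr

theorem abs_smul_sqFiberDensity_const_mul_sq (hc : c ≠ 0) {x : ℝ} (hx : 0 < x) :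
    |2 * c * x| • sqFiberDensity c f (c * x ^ 2) = f x + f (-x) := by
  have hx2 : c * x ^ 2 / c = x ^ 2 := by field_simp
  have hpos : 0 < 2 * |c| * x := by positivity
  rw [sqFiberDensity, hx2, if_pos (by positivity), Real.sqrt_sq hx.le, abs_mul, abs_mul, abs_two,
    abs_of_pos hx, Complex.real_smul, mul_div_cancel₀ _ (by exact_mod_cast hpos.ne')]

theorem integral_mul_comp_const_mul_sq (hc : c ≠ 0) (hf : Integrable f) {g : ℝ → ℂ}
    (hg : Measurable g) (hb : ∃ C : ℝ, ∀ r, ‖g r‖ ≤ C) :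
    ∫ x, f x * g (c * x ^ 2) = ∫ r, sqFiberDensity c f r * g r := by
  obtain ⟨C, hC⟩ := hb
  have hint : Integrable fun x => f x * g (c * x ^ 2) :=
    hf.mul_bdd (hg.comp (by fun_prop)).aestronglyMeasurable (ae_of_all _ fun x => hC _)
  calc ∫ x, f x * g (c * x ^ 2)
      = ∫ x in Ioi 0, (f x + f (-x)) * g (c * x ^ 2) := by
        simp only [integral_eq_integral_Ioi_add_comp_neg hint, neg_sq, add_mul]
    _ = ∫ x in Ioi 0, |2 * c * x| • (sqFiberDensity c f (c * x ^ 2) * g (c * x ^ 2)) :=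
        setIntegral_congr_fun measurableSet_Ioi fun x hx => by
          rw [← smul_mul_assoc, abs_smul_sqFiberDensity_const_mul_sq hc hx]
    _ = ∫ r in {r | 0 < r / c}, sqFiberDensity c f r * g r :=
        (setIntegral_div_pos_eq_integral_Ioi hc fun r => sqFiberDensity c f r * g r).symm
    _ = ∫ r, sqFiberDensity c f r * g r :=
        setIntegral_eq_integral_of_forall_compl_eq_zero fun r hr => by
          rw [sqFiberDensity_of_not_pos hr, zero_mul]

theorem isFiberDensity1_sqFiberDensity (hc : c ≠ 0) (hfm : Measurable f) (hf : Integrable f) :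
    IsFiberDensity1 (fun x => c * x ^ 2) f (sqFiberDensity c f) :=
  ⟨measurable_sqFiberDensity hfm, fun _ hg hb => integral_mul_comp_const_mul_sq hc hf hg hb⟩

theorem memLp_two_sqFiberDensity_iff (hc : c ≠ 0) (hf : Measurable f) :
    MemLp (sqFiberDensity c f) 2 ↔ IntegrableOn (fun x => ‖f x + f (-x)‖ ^ 2 / x) (Ioi 0) := by
  have hsupp : Function.support (fun r => ‖sqFiberDensity c f r‖ ^ 2) ⊆ {r | 0 < r / c} :=
    fun r hr => by_contra fun h => hr (by simp [sqFiberDensity_of_not_pos h])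
  rw [memLp_two_iff_integrable_sq_norm (measurable_sqFiberDensity hf).aestronglyMeasurable,
    ← integrableOn_iff_integrable_of_support_subset hsupp,
    integrableOn_div_pos_iff_integrableOn_Ioi hc, integrableOn_congr_fun (g := fun x =>
      (2 * |c|)⁻¹ * (‖f x + f (-x)‖ ^ 2 / x)) ?_ measurableSet_Ioi, IntegrableOn, IntegrableOn,
    integrable_const_mul_iff (isUnit_iff_ne_zero.2 (by positivity))]
  intro x hx
  have hx : 0 < x := hx
  have h := congrArg (‖·‖) (abs_smul_sqFiberDensity_const_mul_sq (f := f) hc hx)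
  simp only [norm_smul, Real.norm_eq_abs, abs_abs] at h
  simp only [← h, smul_eq_mul, abs_mul, abs_two, abs_of_pos hx]
  field_simp

end sqFiberDensity

theorem eq_zero_of_integrableOn_div_Ioi {G : ℝ → ℝ} (hG : ContinuousAt G 0)
    (h : IntegrableOn (fun x => G x / x) (Ioi 0)) : G 0 = 0 := by
  by_contra h0
  have hbig : (fun x => (x - 0)⁻¹) =O[𝓝[≠] 0] fun x => G x / x := by
    have hbdd : (fun x => (G x)⁻¹) =O[𝓝[≠] 0] fun _ => (1 : ℝ) :=
      ((hG.inv₀ h0).tendsto.mono_left nhdsWithin_le_nhds).isBigO_one ℝ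
    refine (hbdd.mul (isBigO_refl (fun x => G x / x) _)).congr' ?_ (by simp)
    filter_upwards [self_mem_nhdsWithin,
      (hG.eventually_ne h0).filter_mono nhdsWithin_le_nhds] with x hx hGx
    field_simp
    simp
  exact not_intervalIntegrable_of_sub_inv_isBigO_punctured hbig zero_ne_one left_mem_uIcc
    ((intervalIntegrable_iff_integrableOn_Ioc_of_le zero_le_one).2
      (h.mono_set Ioc_subset_Ioi_self))

theorem integrableOn_norm_sq_div_Ioi {E : Type*} [NormedAddCommGroup E] {F : ℝ → E}
    {K : NNReal} (hF : LipschitzWith K F) (hFi : Integrable F) (h0 : F 0 = 0) :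
    IntegrableOn (fun x => ‖F x‖ ^ 2 / x) (Ioi 0) := by
  refine Integrable.mono' (hFi.norm.const_mul K).integrableOn
    ((hF.continuous.norm.pow 2).measurable.div measurable_id).aestronglyMeasurable
    ((ae_restrict_iff' measurableSet_Ioi).2 (ae_of_all _ fun x (hx : 0 < x) => ?_))
  have hlin : ‖F x‖ ≤ K * x := by
    simpa [h0, abs_of_pos hx] using hF.norm_sub_le x 0
  rw [Real.norm_of_nonneg (by positivity), div_le_iff₀ hx, sq]
  nlinarith [norm_nonneg (F x)]

theorem SchwartzMap.exists_lipschitzWith {F : Type*} [NormedAddCommGroup F] [NormedSpace ℝ F]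
    (φ : SchwartzMap ℝ F) : ∃ K, LipschitzWith K φ :=
  ⟨⟨_, apply_nonneg _ _⟩, lipschitzWith_of_nnnorm_deriv_le φ.differentiable fun x =>
    (SchwartzMap.norm_le_seminorm ℝ (SchwartzMap.derivCLM ℝ F φ) x : _)⟩

/-- For `q(x) = c·x²` on `ℝ` (`c ≠ 0`), every Schwartz function `φ` admits a fiber density along
`q`, and any such fiber density is square-integrable if and only if `φ(0) = 0`. -/
theorem fiber_density_dim_one_memL2_iff
    (c : ℝ) (hc : c ≠ 0) (q : ℝ → ℝ) (hqdef : ∀ x, q x = c * x ^ 2)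
    (φ : SchwartzMap ℝ ℂ) :
    (∃ ft : ℝ → ℂ, IsFiberDensity1 q (⇑φ) ft) ∧
      ∀ ft : ℝ → ℂ, IsFiberDensity1 q (⇑φ) ft → (MemLp ft 2 volume ↔ φ 0 = 0) := by
  obtain rfl : q = fun x => c * x ^ 2 := funext hqdef
  have hρ := isFiberDensity1_sqFiberDensity hc φ.continuous.measurable φ.integrable
  refine ⟨⟨_, hρ⟩, fun ft hft => ?_⟩
  obtain ⟨K, hK⟩ := φ.exists_lipschitzWith
  have hF := hK.add (hK.comp LipschitzWith.id.neg)
  rw [memLp_congr_ae (hft.ae_eq hρ), memLp_two_sqFiberDensity_iff hc φ.continuous.measurable]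
  constructor
  · intro h
    simpa using eq_zero_of_integrableOn_div_Ioi (hF.continuous.norm.pow 2).continuousAt h
  · intro h0
    exact integrableOn_norm_sq_div_Ioi hF (φ.integrable.add φ.integrable.comp_neg) (by simp [h0])
end

section
/- Let s ∈ ℂ with Re(s) > 0 and let t ∈ ℝ. Then the function a ↦ |a|^{it} · ((1+a²)(1+a^{-2}))^{-s/2} · |a|^{-1} is absolutely integrable on ℝ \ {0} with respect to Lebesgue measure, and ∫_{ℝ \ {0}} |a|^{it} ((1+a²)(1+a^{-2}))^{-s/2} |a|^{-1} da = Γ((s+it)/2) · Γ((s−it)/2) / Γ(s), where Γ is the complex Gamma function and, for u > 0 and z ∈ ℂ, u^z = exp(z·log u). -/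
/-!
Away from `a = 0` the integrand is `|a|^(s+it-1) (1+a²)^(-s)`: the height function contributes
`(1+a²)^(-s) |a|^s`. This is even in `a`, so the integral is twice the one over `(0, ∞)`. There the
substitution `a = √y` followed by `y = x/(1-x)` turns it into half of Euler's Beta integral
`B((s+it)/2, (s-it)/2) = Γ((s+it)/2) Γ((s-it)/2) / Γ(s)`.
-/

open MeasureTheory

open Set

section EvenIntegrand

variable {E : Type*} [NormedAddCommGroup E] {f : ℝ → E}

theorem integrable_comp_abs_iff : Integrable (fun x => f |x|) ↔ IntegrableOn f (Ioi 0) := by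
  have hIoi : IntegrableOn (fun x => f |x|) (Ioi 0) ↔ IntegrableOn f (Ioi 0) :=
    integrableOn_congr_fun (fun x hx => by rw [abs_of_pos hx]) measurableSet_Ioi
  refine ⟨fun h => hIoi.mp h.integrableOn, fun hf => ?_⟩
  have hIic : IntegrableOn (fun x => f |x|) (Iic 0) := by
    have hneg : MeasurableEmbedding (fun x : ℝ => -x) := (Homeomorph.neg ℝ).measurableEmbedding
    rw [← Measure.map_neg_eq_self (volume : Measure ℝ), hneg.integrableOn_map_iff]
    simp_rw [Function.comp_def, abs_neg, neg_preimage, neg_Iic, neg_zero]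
    exact Iff.mpr integrableOn_Ici_iff_integrableOn_Ioi (hIoi.mpr hf)
  rw [← integrableOn_univ, ← Iic_union_Ioi (a := 0)]
  exact hIic.union (hIoi.mpr hf)

theorem integral_comp_abs_eq_two_smul [NormedSpace ℝ E] :
    ∫ x, f |x| = (2 : ℝ) • ∫ x in Ioi 0, f x := by
  by_cases hf : IntegrableOn f (Ioi 0)
  · have hint := integrable_comp_abs_iff.mpr hf
    have hIoi : ∫ x in Ioi 0, f |x| = ∫ x in Ioi 0, f x :=
      setIntegral_congr_fun measurableSet_Ioi (fun x hx => by rw [abs_of_pos hx])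
    have hIic : ∫ x in Iic 0, f |x| = ∫ x in Ioi 0, f x := by
      simpa only [abs_neg, neg_zero, hIoi] using (integral_comp_neg_Ioi 0 fun x => f |x|).symm
    rw [← setIntegral_univ, ← Iic_union_Ioi (a := 0),
      setIntegral_union (Iic_disjoint_Ioi le_rfl) measurableSet_Ioi hint.integrableOn
        hint.integrableOn, hIic, hIoi, two_smul]
  · rw [integral_undef (mt integrable_comp_abs_iff.mp hf), integral_undef hf, smul_zero]

end EvenIntegrand

theorem hasDerivAt_div_one_sub {x : ℝ} (hx : x ≠ 1) :
    HasDerivAt (fun y : ℝ => y / (1 - y)) ((1 - x)⁻¹ ^ 2) x := by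
  have h1x : 1 - x ≠ 0 := sub_ne_zero.mpr (Ne.symm hx)
  refine ((hasDerivAt_id' x).fun_div ((hasDerivAt_id' x).const_sub 1) h1x).congr_deriv ?_
  field_simp
  ring

theorem injOn_div_one_sub : InjOn (fun x : ℝ => x / (1 - x)) (Iio 1) := by
  intro x hx y hy hxy
  have h1x : 1 - x ≠ 0 := (sub_pos.mpr hx).ne'
  have h1y : 1 - y ≠ 0 := (sub_pos.mpr hy).ne'
  field_simp at hxy
  linarith

theorem image_div_one_sub_Ioo : (fun x : ℝ => x / (1 - x)) '' Ioo 0 1 = Ioi 0 := by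
  ext u
  constructor
  · rintro ⟨x, ⟨hx0, hx1⟩, rfl⟩
    exact div_pos hx0 (sub_pos.mpr hx1)
  · intro (hu : 0 < u)
    refine ⟨u / (1 + u), ⟨by positivity, (div_lt_one (by positivity)).mpr (by linarith)⟩, ?_⟩
    field_simp
    ring

namespace Complex

theorem ofReal_cpow_eq_exp {r : ℝ} (hr : 0 < r) (z : ℂ) :
    (r : ℂ) ^ z = exp (z * Real.log r) := by
  rw [cpow_def_of_ne_zero (ofReal_ne_zero.mpr hr.ne'), ← ofReal_log hr.le, mul_comm]

theorem betaIntegrand_eq_abs_deriv_smul_comp_div_one_sub (u v : ℂ) ⦃x : ℝ⦄ (hx : x ∈ Ioo 0 1) :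
    (x : ℂ) ^ (u - 1) * (1 - (x : ℂ)) ^ (v - 1) =
      |(1 - x)⁻¹ ^ 2| •
        (((x / (1 - x) : ℝ) : ℂ) ^ (u - 1) * (1 + ((x / (1 - x) : ℝ) : ℂ)) ^ (-(u + v))) := by
  obtain ⟨hx0, hx1⟩ := hx
  have h1x : 0 < 1 - x := sub_pos.mpr hx1
  have hone : 1 + x / (1 - x) = (1 - x)⁻¹ := by field_simp; ring
  have hjac : (((1 - x)⁻¹ ^ 2 : ℝ) : ℂ) = ((1 - x : ℝ) : ℂ) ^ (-2 : ℂ) := by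
    rw [cpow_neg, cpow_ofNat, inv_pow]; push_cast; rfl
  rw [abs_of_pos (by positivity), real_smul, hjac, ← ofReal_one, ← ofReal_add, hone, ← ofReal_sub,
    ofReal_cpow_eq_exp (div_pos hx0 h1x), ofReal_cpow_eq_exp (inv_pos.mpr h1x),
    ofReal_cpow_eq_exp hx0, ofReal_cpow_eq_exp h1x, ofReal_cpow_eq_exp h1x,
    Real.log_div hx0.ne' h1x.ne', Real.log_inv, ← exp_add, ← exp_add, ← exp_add]
  congr 1
  push_cast
  ring

theorem betaIntegral_eq_integral_Ioi (u v : ℂ) :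
    betaIntegral u v = ∫ x : ℝ in Ioi 0, (x : ℂ) ^ (u - 1) * (1 + (x : ℂ)) ^ (-(u + v)) := by
  rw [betaIntegral, intervalIntegral.integral_of_le zero_le_one, integral_Ioc_eq_integral_Ioo,
    ← image_div_one_sub_Ioo, integral_image_eq_integral_abs_deriv_smul measurableSet_Ioo
      (fun x hx => (hasDerivAt_div_one_sub hx.2.ne).hasDerivWithinAt)
      (injOn_div_one_sub.mono Ioo_subset_Iio_self)]
  exact setIntegral_congr_fun measurableSet_Ioo
    (betaIntegrand_eq_abs_deriv_smul_comp_div_one_sub u v)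

theorem integrableOn_Ioi_cpow_mul_one_add_cpow {u v : ℂ} (hu : 0 < u.re) (hv : 0 < v.re) :
    IntegrableOn (fun x : ℝ => (x : ℂ) ^ (u - 1) * (1 + (x : ℂ)) ^ (-(u + v))) (Ioi 0) := by
  rw [← image_div_one_sub_Ioo, integrableOn_image_iff_integrableOn_abs_deriv_smul measurableSet_Ioo
      (fun x hx => (hasDerivAt_div_one_sub hx.2.ne).hasDerivWithinAt)
      (injOn_div_one_sub.mono Ioo_subset_Iio_self)]
  have hbeta := (intervalIntegrable_iff_integrableOn_Ioc_of_le zero_le_one).mp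
    (betaIntegral_convergent hu hv)
  exact (hbeta.mono_set Ioo_subset_Ioc_self).congr_fun
    (betaIntegrand_eq_abs_deriv_smul_comp_div_one_sub u v) measurableSet_Ioo

theorem abs_deriv_smul_comp_rpow_two_eq (u w : ℂ) ⦃x : ℝ⦄ (hx : x ∈ Ioi 0) :
    (|(2 : ℝ)| * x ^ ((2 : ℝ) - 1)) •
        (((x ^ (2 : ℝ) : ℝ) : ℂ) ^ (u - 1) * (1 + ((x ^ (2 : ℝ) : ℝ) : ℂ)) ^ w) =
      2 * ((x : ℂ) ^ (2 * u - 1) * (1 + (x : ℂ) ^ 2) ^ w) := by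
  have hx : 0 < x := hx
  have hjac : |(2 : ℝ)| * x ^ ((2 : ℝ) - 1) = 2 * Real.exp (Real.log x) := by
    norm_num [Real.exp_log hx]
  rw [Real.rpow_two, hjac, real_smul, ofReal_cpow_eq_exp (by positivity), ofReal_cpow_eq_exp hx,
    Real.log_pow]
  push_cast
  rw [mul_assoc, ← mul_assoc (exp _), ← exp_add]
  ring_nf

theorem integral_Ioi_cpow_mul_one_add_sq_cpow (u v : ℂ) :
    ∫ x : ℝ in Ioi 0, (x : ℂ) ^ (2 * u - 1) * (1 + (x : ℂ) ^ 2) ^ (-(u + v)) =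
      betaIntegral u v / 2 := by
  rw [betaIntegral_eq_integral_Ioi,
    ← integral_comp_rpow_Ioi (fun y : ℝ => (y : ℂ) ^ (u - 1) * (1 + (y : ℂ)) ^ (-(u + v)))
      two_ne_zero,
    setIntegral_congr_fun measurableSet_Ioi (abs_deriv_smul_comp_rpow_two_eq u _),
    integral_const_mul, mul_div_cancel_left₀ _ two_ne_zero]

theorem integrableOn_Ioi_cpow_mul_one_add_sq_cpow {u v : ℂ} (hu : 0 < u.re) (hv : 0 < v.re) :
    IntegrableOn (fun x : ℝ => (x : ℂ) ^ (2 * u - 1) * (1 + (x : ℂ) ^ 2) ^ (-(u + v)))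
      (Ioi 0) := by
  have h := ((integrableOn_Ioi_comp_rpow_iff _ two_ne_zero).mpr
    (integrableOn_Ioi_cpow_mul_one_add_cpow hu hv)).congr_fun
      (abs_deriv_smul_comp_rpow_two_eq u _) measurableSet_Ioi
  exact (integrable_const_mul_iff (isUnit_iff_ne_zero.mpr two_ne_zero) _).mp h

theorem abs_cpow_mul_height_cpow_mul_abs_inv {a : ℝ} (ha : a ≠ 0) (s z : ℂ) :
    ((|a| : ℝ) : ℂ) ^ z * ((((1 + a ^ 2) * (1 + a⁻¹ ^ 2) : ℝ) : ℂ) ^ (-(s / 2))) *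
        ((|a|⁻¹ : ℝ) : ℂ) =
      ((|a| : ℝ) : ℂ) ^ (s + z - 1) * (1 + ((|a| : ℝ) : ℂ) ^ 2) ^ (-s) := by
  have hx : 0 < |a| := abs_pos.mpr ha
  have h1 : 0 < 1 + |a| ^ 2 := by positivity
  have hprod : (1 + a ^ 2) * (1 + a⁻¹ ^ 2) = (1 + |a| ^ 2) ^ 2 / |a| ^ 2 := by
    rw [sq_abs]; field_simp; ring
  have hq : 0 < (1 + |a| ^ 2) ^ 2 / |a| ^ 2 := by positivity
  have hinv : ((|a|⁻¹ : ℝ) : ℂ) = ((|a| : ℝ) : ℂ) ^ (-1 : ℂ) := by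
    rw [cpow_neg_one, ofReal_inv]
  have hone : 1 + ((|a| : ℝ) : ℂ) ^ 2 = ((1 + |a| ^ 2 : ℝ) : ℂ) := by push_cast; rfl
  rw [hprod, hinv, hone]
  simp only [ofReal_cpow_eq_exp hx, ofReal_cpow_eq_exp h1, ofReal_cpow_eq_exp hq, ← exp_add]
  rw [Real.log_div (by positivity) (by positivity), Real.log_pow, Real.log_pow]
  congr 1
  push_cast
  ring

end Complex

/-- **Evaluation of the archimedean local height integral** (split case `SO(V₀)(ℝ) ≅ ℝˣ`):
for `Re s > 0` and `t ∈ ℝ`,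
`∫_{ℝ∖{0}} |a|^{it} ((1+a²)(1+a⁻²))^{-s/2} |a|⁻¹ da = Γ((s+it)/2) Γ((s−it)/2) / Γ(s)`,
the integral being absolutely convergent. -/
theorem archimedean_height_integral_eval (s : ℂ) (hs : 0 < s.re) (t : ℝ) :
    IntegrableOn
        (fun a : ℝ =>
          (((|a| : ℝ) : ℂ) ^ (Complex.I * (t : ℂ))) *
            ((((1 + a ^ 2) * (1 + (a⁻¹) ^ 2) : ℝ) : ℂ) ^ (-(s / 2))) *
            ((|a|⁻¹ : ℝ) : ℂ))
        ({0}ᶜ : Set ℝ) volume ∧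
    (∫ a in ({0}ᶜ : Set ℝ),
        (((|a| : ℝ) : ℂ) ^ (Complex.I * (t : ℂ))) *
          ((((1 + a ^ 2) * (1 + (a⁻¹) ^ 2) : ℝ) : ℂ) ^ (-(s / 2))) *
          ((|a|⁻¹ : ℝ) : ℂ)) =
      Complex.Gamma ((s + Complex.I * (t : ℂ)) / 2) *
        Complex.Gamma ((s - Complex.I * (t : ℂ)) / 2) / Complex.Gamma s := by
  set u := (s + Complex.I * t) / 2
  set v := (s - Complex.I * t) / 2
  have hu : 0 < u.re := by simpa [u] using hs
  have hv : 0 < v.re := by simpa [v] using hs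
  have huv : u + v = s := by ring
  have hG : ∀ a ∈ ({0}ᶜ : Set ℝ), ((|a| : ℝ) : ℂ) ^ (Complex.I * t) *
      ((((1 + a ^ 2) * (1 + a⁻¹ ^ 2) : ℝ) : ℂ) ^ (-(s / 2))) * ((|a|⁻¹ : ℝ) : ℂ) =
        ((|a| : ℝ) : ℂ) ^ (2 * u - 1) * (1 + ((|a| : ℝ) : ℂ) ^ 2) ^ (-(u + v)) := fun a ha => by
    rw [Complex.abs_cpow_mul_height_cpow_mul_abs_inv ha, huv,
      show 2 * u - 1 = s + Complex.I * t - 1 by simp only [u]; ring]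
  have hint := integrable_comp_abs_iff.mpr (Complex.integrableOn_Ioi_cpow_mul_one_add_sq_cpow hu hv)
  refine ⟨hint.integrableOn.congr_fun (fun a ha => (hG a ha).symm)
    (measurableSet_singleton 0).compl, ?_⟩
  rw [setIntegral_congr_fun (measurableSet_singleton 0).compl hG, restrict_compl_singleton,
    integral_comp_abs_eq_two_smul
      (f := fun x : ℝ => (x : ℂ) ^ (2 * u - 1) * (1 + (x : ℂ) ^ 2) ^ (-(u + v))),
    Complex.integral_Ioi_cpow_mul_one_add_sq_cpow, Complex.betaIntegral_eq_Gamma_mul_div u v hu hv,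
    huv, Complex.real_smul, Complex.ofReal_ofNat, mul_div_cancel₀ _ two_ne_zero]
end
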